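/- In the labelled tree R, let u, v be tree vertices. Then: (1) spin_u(w) = spin_v(w) for every tree vertex w distinct from u and v that does not lie on P_{u,v}; and (2) spin_u(w) = −spin_v(w) for every tree vertex w distinct from u and v lying on P_{u,v}, with the only exception that if w ≠ r and P_{r,u} ∩ P_{r,v} = P_{r,w}, then spin_u(w) = spin_v(w). -/

import Mathlib

open SimpleGraph

/-- The number of consecutive pairs (adjacent pairs of equal labels) along a list of
vertices (the support of a walk). -/
def cpCount {V : Type} (lab : V → ℕ) (l : List V) : ℕ :=
  (l.zip l.tail).countP (fun q => decide (lab q.1 = lab q.2))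

/-- The number of tree vertices (vertices of label `0`) on a list of vertices. -/
def tvCount {V : Type} (lab : V → ℕ) (l : List V) : ℕ :=
  l.countP (fun x => decide (lab x = 0))

/-- `a` and `b` lie in the same connected component of `R − v`:
some walk from `a` to `b` avoids `v`. -/
def SameSide {V : Type} (R : SimpleGraph V) (v a b : V) : Prop :=
  ∃ p : R.Walk a b, v ∉ p.support

section CpAux

variable {V : Type} (lab : V → ℕ)

def eGet (x : V) : Option V → ℕ
  | none => 0
  | some y => if lab x = lab y then 1 else 0

def eGet' (o : Option V) (a : V) : ℕ :=
  match o with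
  | none => 0
  | some x => if lab x = lab a then 1 else 0

lemma cp_nil : cpCount lab ([] : List V) = 0 := rfl

lemma cp_single (x : V) : cpCount lab [x] = 0 := rfl

lemma cp_cons (x : V) (l : List V) :
    cpCount lab (x :: l) = eGet lab x l.head? + cpCount lab l := by
  cases l with
  | nil => simp [cpCount, eGet]
  | cons y t =>
    simp only [cpCount, List.tail_cons, List.zip_cons_cons, List.countP_cons, eGet,
      List.head?_cons, decide_eq_true_eq]
    omega

lemma cp_append_gen : ∀ (A : List V) (x : V) (B : List V),
    cpCount lab (A ++ x :: B) = cpCount lab (A ++ [x]) + cpCount lab (x :: B) := by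
  intro A
  induction A with
  | nil => intro x B; simp [cp_single]
  | cons a A' ih =>
    intro x B
    have h1 : (a :: A') ++ x :: B = a :: (A' ++ x :: B) := rfl
    have h2 : (a :: A') ++ [x] = a :: (A' ++ [x]) := rfl
    rw [h1, h2, cp_cons, cp_cons, ih]
    have : (A' ++ x :: B).head? = (A' ++ [x]).head? := by
      cases A' <;> simp
    rw [this]
    omega

lemma cp_concat : ∀ (A : List V) (a : V),
    cpCount lab (A ++ [a]) = cpCount lab A + eGet' lab A.getLast? a := by
  intro A
  induction A with
  | nil => intro a; simp [cp_single, cp_nil, eGet']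
  | cons b A' ih =>
    intro a
    rw [List.cons_append, cp_cons, ih, cp_cons]
    cases A' with
    | nil => simp [eGet, eGet']; omega
    | cons c A'' => simp [eGet, eGet']; omega

lemma cp_reverse : ∀ (l : List V), cpCount lab l.reverse = cpCount lab l := by
  intro l
  induction l with
  | nil => rfl
  | cons x l ih =>
    rw [List.reverse_cons, cp_concat, ih, cp_cons]
    rw [List.getLast?_reverse]
    cases h : l.head? with
    | none => simp [eGet, eGet']
    | some y => simp [eGet, eGet', eq_comm]; omega

lemma tv_reverse (l : List V) : tvCount lab l.reverse = tvCount lab l := by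
  simp [tvCount]

lemma tv_append (A B : List V) : tvCount lab (A ++ B) = tvCount lab A + tvCount lab B := by
  simp [tvCount, List.countP_append]

end CpAux

section Walks

variable {V : Type} {R : SimpleGraph V}

/-- weight of a walk -/
def wtW (lab : V → ℕ) {x y : V} (p : R.Walk x y) : ℤ :=
  (-1 : ℤ) ^ (cpCount lab p.support + tvCount lab p.support)

variable (lab : V → ℕ)

lemma wt_sq {x y : V} (p : R.Walk x y) : wtW lab p * wtW lab p = 1 := by
  rw [wtW, ← pow_add]
  exact Even.neg_one_pow ⟨_, rfl⟩

lemma wt_reverse {x y : V} (p : R.Walk x y) : wtW lab p.reverse = wtW lab p := by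
  rw [wtW, wtW, SimpleGraph.Walk.support_reverse, cp_reverse, tv_reverse]

lemma support_concat {x y : V} (p : R.Walk x y) :
    ∃ A, p.support = A ++ [y] := by
  refine ⟨p.reverse.support.tail.reverse, ?_⟩
  have h : p.reverse.support = y :: p.reverse.support.tail :=
    SimpleGraph.Walk.support_eq_cons _
  have := congrArg List.reverse h
  simpa [SimpleGraph.Walk.support_reverse] using this

lemma wt_append {x y z : V} (p : R.Walk x y) (q : R.Walk y z) :
    wtW lab (p.append q) * (if lab y = 0 then -1 else 1) = wtW lab p * wtW lab q := by
  obtain ⟨A, hA⟩ := support_concat p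
  have hq : q.support = y :: q.support.tail := SimpleGraph.Walk.support_eq_cons _
  have hsupp : (p.append q).support = A ++ y :: q.support.tail := by
    rw [SimpleGraph.Walk.support_append, hA]; simp
  have hcp : cpCount lab (p.append q).support
      = cpCount lab p.support + cpCount lab q.support := by
    rw [hsupp, cp_append_gen, hA, ← hq]
  have hsingle : tvCount lab [y] = (if lab y = 0 then 1 else 0) := by
    by_cases hy : lab y = 0 <;> simp [tvCount, hy]
  have htv : tvCount lab (p.append q).support + (if lab y = 0 then 1 else 0)
      = tvCount lab p.support + tvCount lab q.support := by
    have e2 := tv_append lab (A ++ [y]) q.support.tail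
    have e3 := tv_append lab [y] q.support.tail
    have e1 := tv_append lab A [y]
    simp only [List.singleton_append] at e3
    have e4 : tvCount lab q.support = tvCount lab (y :: q.support.tail) := by rw [← hq]
    rw [hsupp, hA]
    rw [show (A ++ y :: q.support.tail) = (A ++ [y]) ++ q.support.tail by simp]
    omega
  have key : cpCount lab (p.append q).support + tvCount lab (p.append q).support
      + (if lab y = 0 then 1 else 0)
      = (cpCount lab p.support + tvCount lab p.support)
        + (cpCount lab q.support + tvCount lab q.support) := by omega
  rw [wtW, wtW, wtW, ← pow_add, ← key, pow_add]
  by_cases hy : lab y = 0 <;> simp [hy, pow_succ] <;> ring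

lemma append_path_inter {x y z : V} {p : R.Walk x y} {q : R.Walk y z}
    (h : (p.append q).IsPath) {t : V} (ht1 : t ∈ p.support) (ht2 : t ∈ q.support) :
    t = y := by
  have hnd := (SimpleGraph.Walk.isPath_def _).1 h
  rw [SimpleGraph.Walk.support_append, List.nodup_append] at hnd
  by_contra hne
  have : t ∈ q.support.tail := by
    have hc := SimpleGraph.Walk.support_eq_cons q
    rw [hc, List.mem_cons] at ht2
    exact ht2.resolve_left hne
  exact hnd.2.2 _ ht1 _ this rfl
end Walks

section Tree

variable {V : Type} {R : SimpleGraph V} (htree : R.IsTree)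

/-- the unique path between two vertices of a tree -/
noncomputable def Pa (x y : V) : R.Walk x y := (htree.existsUnique_path x y).choose

lemma Pa_isPath (x y : V) : (Pa htree x y).IsPath :=
  (htree.existsUnique_path x y).choose_spec.1

lemma Pa_unique {x y : V} (p : R.Walk x y) (hp : p.IsPath) : p = Pa htree x y :=
  (htree.existsUnique_path x y).choose_spec.2 p hp

lemma Pa_self (x : V) : Pa htree x x = SimpleGraph.Walk.nil :=
  (Pa_unique htree _ SimpleGraph.Walk.IsPath.nil).symm

lemma Pa_reverse (x y : V) : Pa htree y x = (Pa htree x y).reverse :=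
  (Pa_unique htree _ ((Pa_isPath htree x y).reverse)).symm

lemma mem_Pa_symm {x y t : V} (h : t ∈ (Pa htree x y).support) :
    t ∈ (Pa htree y x).support := by
  rw [Pa_reverse htree x y, SimpleGraph.Walk.support_reverse, List.mem_reverse]
  exact h

lemma mem_Pa_decomp {x y z : V} (h : y ∈ (Pa htree x z).support) :
    Pa htree x z = (Pa htree x y).append (Pa htree y z) := by
  classical
  have h1 : ((Pa htree x z).takeUntil y h) = Pa htree x y :=
    Pa_unique htree _ ((Pa_isPath htree x z).takeUntil h)
  have h2 : ((Pa htree x z).dropUntil y h) = Pa htree y z :=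
    Pa_unique htree _ ((Pa_isPath htree x z).dropUntil h)
  rw [← h1, ← h2, SimpleGraph.Walk.take_spec]

lemma wt_decomp (lab : V → ℕ) {x y z : V} (h : y ∈ (Pa htree x z).support) :
    wtW lab (Pa htree x z) * (if lab y = 0 then -1 else 1)
      = wtW lab (Pa htree x y) * wtW lab (Pa htree y z) := by
  rw [mem_Pa_decomp htree h]
  exact wt_append lab _ _

lemma sameSide_iff {x a b : V} : SameSide R x a b ↔ x ∉ (Pa htree a b).support := by
  classical
  constructor
  · rintro ⟨q, hq⟩ hx
    have hbp : q.bypass = Pa htree a b := Pa_unique htree _ q.bypass_isPath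
    rw [← hbp] at hx
    exact hq (q.support_bypass_subset hx)
  · intro h
    exact ⟨Pa htree a b, h⟩

lemma supp_set_eq {x a b : V}
    (h : ∀ t, t ∈ (Pa htree x a).support ↔ t ∈ (Pa htree x b).support) : a = b := by
  have ha : a ∈ (Pa htree x b).support :=
    (h a).1 (SimpleGraph.Walk.end_mem_support _)
  have hb : b ∈ (Pa htree x a).support :=
    (h b).2 (SimpleGraph.Walk.end_mem_support _)
  have hdec := mem_Pa_decomp htree ha
  have hpath : ((Pa htree x a).append (Pa htree a b)).IsPath := by
    rw [← hdec]; exact Pa_isPath htree x b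
  exact (append_path_inter hpath hb (SimpleGraph.Walk.end_mem_support _)).symm

end Tree

section Split

variable {V : Type} {R : SimpleGraph V}

lemma second_vertex_eq {x t : V} {q1 q2 : R.Walk x t} (h : q1 = q2) :
    q1.support.tail.head? = q2.support.tail.head? := by rw [h]

lemma split_walks (htree : R.IsTree) : ∀ {x y : V} (p : R.Walk x y) {z : V} (q : R.Walk x z),
    p.IsPath → q.IsPath →
    ∃ (m : V) (s : R.Walk x m) (A : R.Walk m y) (B : R.Walk m z),
      p = s.append A ∧ q = s.append B ∧
      (∀ t, t ∈ A.support → t ∈ B.support → t = m) := by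
  intro x y p
  induction p with
  | nil =>
    intro z q _ _
    exact ⟨_, SimpleGraph.Walk.nil, SimpleGraph.Walk.nil, q, rfl, rfl,
      fun t ht _ => by simpa using ht⟩
  | @cons x x₁ y e p' ih =>
    intro z q hp hq
    cases q with
    | nil =>
      exact ⟨_, SimpleGraph.Walk.nil, SimpleGraph.Walk.cons e p', SimpleGraph.Walk.nil,
        rfl, rfl, fun t _ ht => by simpa using ht⟩
    | @cons _ x₂ _ f q' =>
      by_cases hx : x₁ = x₂
      · subst hx
        obtain ⟨m, s, A, B, h1, h2, h3⟩ := ih q' hp.of_cons hq.of_cons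
        exact ⟨m, SimpleGraph.Walk.cons e s, A, B, by rw [SimpleGraph.Walk.cons_append, ← h1],
          by rw [SimpleGraph.Walk.cons_append, ← h2], h3⟩
      · refine ⟨x, SimpleGraph.Walk.nil, SimpleGraph.Walk.cons e p',
          SimpleGraph.Walk.cons f q', rfl, rfl, ?_⟩
        intro t ht1 ht2
        by_contra htx
        obtain ⟨qa, ra, hqa⟩ := SimpleGraph.Walk.mem_support_iff_exists_append.1 ht1
        obtain ⟨qb, rb, hqb⟩ := SimpleGraph.Walk.mem_support_iff_exists_append.1 ht2
        have hqa_path : qa.IsPath := by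
          apply SimpleGraph.Walk.IsPath.of_append_left (q := ra); rwa [← hqa]
        have hqb_path : qb.IsPath := by
          apply SimpleGraph.Walk.IsPath.of_append_left (q := rb); rwa [← hqb]
        have heq : qa = qb := (Pa_unique htree qa hqa_path).trans
          (Pa_unique htree qb hqb_path).symm
        cases qa with
        | nil => exact htx rfl
        | @cons _ n1 _ g1 w1 =>
          cases qb with
          | nil => exact htx rfl
          | @cons _ n2 _ g2 w2 =>
            apply hx
            have e1 : x₁ = n1 := by
              have := congrArg SimpleGraph.Walk.support hqa
              rw [SimpleGraph.Walk.support_cons, SimpleGraph.Walk.cons_append,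
                SimpleGraph.Walk.support_cons] at this
              obtain ⟨-, h2⟩ := List.cons.inj this
              rw [SimpleGraph.Walk.support_eq_cons p',
                SimpleGraph.Walk.support_eq_cons (w1.append ra)] at h2
              exact (List.cons.inj h2).1
            have e2 : x₂ = n2 := by
              have := congrArg SimpleGraph.Walk.support hqb
              rw [SimpleGraph.Walk.support_cons, SimpleGraph.Walk.cons_append,
                SimpleGraph.Walk.support_cons] at this
              obtain ⟨-, h2⟩ := List.cons.inj this
              rw [SimpleGraph.Walk.support_eq_cons q',
                SimpleGraph.Walk.support_eq_cons (w2.append rb)] at h2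
              exact (List.cons.inj h2).1
            have e3 : n1 = n2 := by
              have := congrArg SimpleGraph.Walk.support heq
              rw [SimpleGraph.Walk.support_cons, SimpleGraph.Walk.support_cons] at this
              obtain ⟨-, h2⟩ := List.cons.inj this
              rw [SimpleGraph.Walk.support_eq_cons w1,
                SimpleGraph.Walk.support_eq_cons w2] at h2
              exact (List.cons.inj h2).1
            rw [e1, e2, e3]

lemma rev_append_isPath {m y z : V} {A : R.Walk m y} {B : R.Walk m z}
    (hA : A.IsPath) (hB : B.IsPath)
    (hAB : ∀ t, t ∈ A.support → t ∈ B.support → t = m) :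
    (A.reverse.append B).IsPath := by
  rw [SimpleGraph.Walk.isPath_def, SimpleGraph.Walk.support_append,
    SimpleGraph.Walk.support_reverse, List.nodup_append]
  refine ⟨List.nodup_reverse.2 ((SimpleGraph.Walk.isPath_def _).1 hA), ?_, ?_⟩
  · have := (SimpleGraph.Walk.isPath_def _).1 hB
    rw [SimpleGraph.Walk.support_eq_cons B] at this
    exact this.of_cons
  · intro t ht1 _ ht2 rfl
    rw [List.mem_reverse] at ht1
    have htB : t ∈ B.support := List.mem_of_mem_tail ht2
    have : t = m := hAB t ht1 htB
    subst this
    have := (SimpleGraph.Walk.isPath_def _).1 hB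
    rw [SimpleGraph.Walk.support_eq_cons B] at this
    exact (List.nodup_cons.1 this).1 ht2

/-- full median package: split of the two paths from `x` to `y` and to `z`. -/
lemma median_full (htree : R.IsTree) (x y z : V) :
    ∃ (m : V) (s : R.Walk x m) (A : R.Walk m y) (B : R.Walk m z),
      Pa htree x y = s.append A ∧ Pa htree x z = s.append B ∧
      Pa htree y z = A.reverse.append B ∧
      (∀ t, t ∈ A.support → t ∈ B.support → t = m) := by
  obtain ⟨m, s, A, B, h1, h2, h3⟩ :=
    split_walks htree (Pa htree x y) (Pa htree x z) (Pa_isPath htree x y) (Pa_isPath htree x z)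
  have hA : A.IsPath := by
    apply SimpleGraph.Walk.IsPath.of_append_right (p := s); rw [← h1]; exact Pa_isPath _ _ _
  have hB : B.IsPath := by
    apply SimpleGraph.Walk.IsPath.of_append_right (p := s); rw [← h2]; exact Pa_isPath _ _ _
  exact ⟨m, s, A, B, h1, h2, (Pa_unique htree _ (rev_append_isPath hA hB h3)).symm, h3⟩

end Split

section Branch

variable {V : Type} {R : SimpleGraph V}

lemma walk_cons_of_ne {m x : V} (W : R.Walk m x) (h : m ≠ x) :
    ∃ (n : V) (g : R.Adj m n) (W' : R.Walk n x), W = SimpleGraph.Walk.cons g W' := by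
  cases W with
  | nil => exact absurd rfl h
  | cons g W' => exact ⟨_, g, W', rfl⟩

lemma branch_lab_ne (lab : V → ℕ)
    (h0 : ∀ v, lab v = 0 → ∃ a b, a ≠ b ∧ R.neighborSet v = {a, b} ∧
      lab a = 1 ∧ lab b = 1)
    {x y z m : V} {s : R.Walk x m} {A : R.Walk m y} {B : R.Walk m z}
    (hP1 : (s.append A).IsPath) (hP2 : (s.append B).IsPath)
    (hAB : ∀ t, t ∈ A.support → t ∈ B.support → t = m)
    (hmx : m ≠ x) (hmy : m ≠ y) (hmz : m ≠ z) : lab m ≠ 0 := by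
  obtain ⟨a₁, gA, A', hA'⟩ := walk_cons_of_ne A hmy
  obtain ⟨b₁, gB, B', hB'⟩ := walk_cons_of_ne B hmz
  obtain ⟨n₀, g, s', hs'⟩ := walk_cons_of_ne s.reverse hmx
  have hApath : A.IsPath := hP1.of_append_right
  have hBpath : B.IsPath := hP2.of_append_right
  have hspath : s.IsPath := hP1.of_append_left
  -- memberships
  have ha₁_tail : a₁ ∈ A.support.tail := by
    rw [hA', SimpleGraph.Walk.support_cons, List.tail_cons]
    exact SimpleGraph.Walk.start_mem_support A'
  have ha₁_mem : a₁ ∈ A.support := List.mem_of_mem_tail ha₁_tail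
  have hb₁_tail : b₁ ∈ B.support.tail := by
    rw [hB', SimpleGraph.Walk.support_cons, List.tail_cons]
    exact SimpleGraph.Walk.start_mem_support B'
  have hb₁_mem : b₁ ∈ B.support := List.mem_of_mem_tail hb₁_tail
  have hn₀_mem : n₀ ∈ s.support := by
    rw [← List.mem_reverse, ← SimpleGraph.Walk.support_reverse, hs',
      SimpleGraph.Walk.support_cons]
    exact List.mem_cons_of_mem _ (SimpleGraph.Walk.start_mem_support s')
  -- distinctness
  have hAne : a₁ ≠ b₁ := by
    intro he
    have : a₁ = m := hAB a₁ ha₁_mem (he ▸ hb₁_mem)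
    subst this
    have := (SimpleGraph.Walk.isPath_def _).1 hApath
    rw [SimpleGraph.Walk.support_eq_cons A] at this
    exact (List.nodup_cons.1 this).1 ha₁_tail
  have hdisj1 : n₀ ≠ a₁ := by
    intro he
    have hnd := (SimpleGraph.Walk.isPath_def _).1 hP1
    rw [SimpleGraph.Walk.support_append, List.nodup_append] at hnd
    exact hnd.2.2 _ hn₀_mem _ ha₁_tail he
  have hdisj2 : n₀ ≠ b₁ := by
    intro he
    have hnd := (SimpleGraph.Walk.isPath_def _).1 hP2
    rw [SimpleGraph.Walk.support_append, List.nodup_append] at hnd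
    exact hnd.2.2 _ hn₀_mem _ hb₁_tail he
  -- adjacency pigeonhole
  intro hm0
  obtain ⟨α, β, hαβ, hN, -, -⟩ := h0 m hm0
  have hmem : ∀ c : V, R.Adj m c → c = α ∨ c = β := by
    intro c hc
    have : c ∈ R.neighborSet m := hc
    rw [hN] at this
    simpa using this
  have hgA := hmem a₁ gA
  have hgB := hmem b₁ gB
  have hg := hmem n₀ g
  rcases hgA with h1 | h1 <;> rcases hgB with h2 | h2 <;> rcases hg with h3 | h3 <;>
    simp_all

end Branch

section Sign

variable {V : Type} {R : SimpleGraph V} (htree : R.IsTree)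

lemma sign_eq' (sign : V → V → ℤ) (r : V)
    (hsignr_comp : ∀ a b, a ≠ r → b ≠ r → (sign r a = sign r b ↔ SameSide R r a b))
    {a b : V} (ha : a ≠ r) (hb : b ≠ r) (h : r ∉ (Pa htree a b).support) :
    sign r a = sign r b :=
  (hsignr_comp a b ha hb).2 ⟨_, h⟩

lemma sign_neg' (sign : V → V → ℤ) (r : V)
    (hsignr_val : ∀ u, u ≠ r → sign r u = 1 ∨ sign r u = -1)
    (hsignr_comp : ∀ a b, a ≠ r → b ≠ r → (sign r a = sign r b ↔ SameSide R r a b))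
    {a b : V} (ha : a ≠ r) (hb : b ≠ r) (h : r ∈ (Pa htree a b).support) :
    sign r a = - sign r b := by
  have hne : sign r a ≠ sign r b := by
    intro he
    exact ((sameSide_iff htree).1 ((hsignr_comp a b ha hb).1 he)) h
  rcases hsignr_val a ha with h1 | h1 <;> rcases hsignr_val b hb with h2 | h2 <;>
    rw [h1, h2] at hne ⊢ <;> omega

end Sign

section Master

open SimpleGraph.Walk

open scoped Classical

variable {V : Type} {R : SimpleGraph V}

lemma master (htree : R.IsTree) (lab : V → ℕ) (r : V)
    (hr : lab r = 0)
    (h0 : ∀ v, lab v = 0 → ∃ a b, a ≠ b ∧ R.neighborSet v = {a, b} ∧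
      lab a = 1 ∧ lab b = 1)
    (sign : V → V → ℤ) (spin : V → V → ℤ)
    (hsignr_val : ∀ u, u ≠ r → sign r u = 1 ∨ sign r u = -1)
    (hsignr_comp : ∀ a b, a ≠ r → b ≠ r → (sign r a = sign r b ↔ SameSide R r a b))
    (hspin : ∀ v u, lab v = 0 → lab u = 0 → u ≠ v →
      ∀ p : R.Walk v u, p.IsPath →
        spin v u = sign v u * (-1) ^ (cpCount lab p.support + tvCount lab p.support))
    (hsignv : ∀ v, lab v = 0 → v ≠ r → ∀ u, u ≠ v →
      (SameSide R v u r → sign v u = spin r v) ∧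
      (¬ SameSide R v u r → sign v u = - spin r v))
    {u w : V} (hu : lab u = 0) (hw : lab w = 0) (hwu : w ≠ u) (hwr : w ≠ r) :
    spin u w = sign r w * (if w ∈ (Pa htree r u).support then -1 else 1)
      * wtW lab (Pa htree r w) := by
  by_cases hur : u = r
  · subst hur
    have h1 : spin u w = sign u w * wtW lab (Pa htree u w) :=
      hspin u w hu hw hwu (Pa htree u w) (Pa_isPath htree u w)
    have hδ : w ∉ (Pa htree u u).support := by
      rw [Pa_self htree u]
      simpa using hwu
    rw [h1, if_neg hδ, mul_one]
  · -- u ≠ r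
    have h1 : spin u w = sign u w * wtW lab (Pa htree u w) :=
      hspin u w hu hw hwu (Pa htree u w) (Pa_isPath htree u w)
    have h2 : spin r u = sign r u * wtW lab (Pa htree r u) :=
      hspin r u hr hu hur (Pa htree r u) (Pa_isPath htree r u)
    have hsv := hsignv u hu hur w hwu
    by_cases hA : w ∈ (Pa htree r u).support
    · -- Case A : w strictly inside P(r,u)
      have hdec : Pa htree r u = (Pa htree r w).append (Pa htree w u) :=
        mem_Pa_decomp htree hA
      have hpath : ((Pa htree r w).append (Pa htree w u)).IsPath := by
        rw [← hdec]; exact Pa_isPath htree r u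
      have hupath : u ∉ (Pa htree r w).support := by
        intro hu'
        exact hwu (append_path_inter hpath hu' (end_mem_support _)).symm
      have hss : SameSide R u w r := by
        rw [sameSide_iff htree]
        intro hmem
        exact hupath (mem_Pa_symm htree hmem)
      have hs1 : sign u w = spin r u := hsv.1 hss
      have hrn : r ∉ (Pa htree w u).support := by
        intro hr'
        exact hwr ((append_path_inter hpath (start_mem_support _) hr').symm)
      have hsg : sign r u = sign r w := by
        refine sign_eq' htree sign r hsignr_comp hur hwr ?_
        intro hmem
        exact hrn (mem_Pa_symm htree hmem)
      have hwt := wt_decomp htree lab hA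
      rw [if_pos hw] at hwt
      have hwrev : wtW lab (Pa htree w u) = wtW lab (Pa htree u w) := by
        rw [Pa_reverse htree u w, wt_reverse]
      rw [hwrev] at hwt
      have hsq := wt_sq lab (Pa htree u w)
      rw [h1, hs1, h2, hsg, if_pos hA]
      linear_combination (-(sign r w * wtW lab (Pa htree u w))) * hwt
        - (sign r w * wtW lab (Pa htree r w)) * hsq
    · -- Case B : w ∉ P(r,u)
      rw [if_neg hA]
      by_cases hB1 : u ∈ (Pa htree r w).support
      · -- B1
        have hdec : Pa htree r w = (Pa htree r u).append (Pa htree u w) :=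
          mem_Pa_decomp htree hB1
        have hpath : ((Pa htree r u).append (Pa htree u w)).IsPath := by
          rw [← hdec]; exact Pa_isPath htree r w
        have hss : ¬ SameSide R u w r := by
          rw [sameSide_iff htree]
          intro hmem
          exact hmem (mem_Pa_symm htree hB1)
        have hs1 : sign u w = - spin r u := hsv.2 hss
        have hrn : r ∉ (Pa htree u w).support := by
          intro hr'
          exact hur ((append_path_inter hpath (start_mem_support _) hr')).symm
        have hsg : sign r u = sign r w :=
          sign_eq' htree sign r hsignr_comp hur hwr hrn
        have hwt := wt_decomp htree lab hB1
        rw [if_pos hu] at hwt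
        rw [h1, hs1, h2, hsg]
        linear_combination (sign r w) * hwt
      · by_cases hB2 : r ∈ (Pa htree u w).support
        · -- B2
          have hss : SameSide R u w r := by
            rw [sameSide_iff htree]
            intro hmem
            exact hB1 (mem_Pa_symm htree hmem)
          have hs1 : sign u w = spin r u := hsv.1 hss
          have hsg : sign r u = - sign r w :=
            sign_neg' htree sign r hsignr_val hsignr_comp hur hwr hB2
          have hwt := wt_decomp htree lab hB2
          rw [if_pos hr] at hwt
          have hwrev : wtW lab (Pa htree u r) = wtW lab (Pa htree r u) := by
            rw [Pa_reverse htree r u, wt_reverse]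
          rw [hwrev] at hwt
          have hsq := wt_sq lab (Pa htree r u)
          rw [h1, hs1, h2, hsg]
          linear_combination (sign r w * wtW lab (Pa htree r u)) * hwt
            + (sign r w * wtW lab (Pa htree r w)) * hsq
        · -- B3 : median case
          obtain ⟨m, s, A, B, hm1, hm2, hm3, hm4⟩ := median_full htree u r w
          have hmem_rw : m ∈ (Pa htree r w).support := by
            rw [hm3, mem_support_append_iff]
            exact Or.inl (end_mem_support _)
          have hmem_uw : m ∈ (Pa htree u w).support := by
            rw [hm2, mem_support_append_iff]
            exact Or.inl (end_mem_support _)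
          have hmem_ur : m ∈ (Pa htree u r).support := by
            rw [hm1, mem_support_append_iff]
            exact Or.inl (end_mem_support _)
          have hmu : m ≠ u := by
            intro he; exact hB1 (he ▸ hmem_rw)
          have hmr : m ≠ r := by
            intro he; exact hB2 (he ▸ hmem_uw)
          have hmw : m ≠ w := by
            intro he; exact hA (he ▸ (mem_Pa_symm htree hmem_ur))
          have hP1 : (s.append A).IsPath := by rw [← hm1]; exact Pa_isPath htree u r
          have hP2 : (s.append B).IsPath := by rw [← hm2]; exact Pa_isPath htree u w
          have hlabm : lab m ≠ 0 := branch_lab_ne lab h0 hP1 hP2 hm4 hmu hmr hmw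
          have hss : SameSide R u w r := by
            rw [sameSide_iff htree]
            intro hmem
            exact hB1 (mem_Pa_symm htree hmem)
          have hs1 : sign u w = spin r u := hsv.1 hss
          have hsg : sign r u = sign r w :=
            sign_eq' htree sign r hsignr_comp hur hwr hB2
          have wA1 : wtW lab (Pa htree u r) * 1 = wtW lab s * wtW lab A := by
            have := wt_append lab s A
            rw [if_neg hlabm] at this
            rw [hm1]; exact this
          have wA2 : wtW lab (Pa htree u w) * 1 = wtW lab s * wtW lab B := by
            have := wt_append lab s B
            rw [if_neg hlabm] at this
            rw [hm2]; exact this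
          have wA3 : wtW lab (Pa htree r w) * 1 = wtW lab A * wtW lab B := by
            have := wt_append lab A.reverse B
            rw [if_neg hlabm, wt_reverse] at this
            rw [hm3]; exact this
          have hwrev : wtW lab (Pa htree u r) = wtW lab (Pa htree r u) := by
            rw [Pa_reverse htree r u, wt_reverse]
          rw [hwrev] at wA1
          have hsq := wt_sq lab s
          rw [h1, hs1, h2, hsg, mul_one] at *
          rw [wA1, wA2, wA3]
          linear_combination (sign r w * wtW lab A * wtW lab B) * hsq

end Master

/-- In the labelled tree `R`, let `u, v` be tree vertices.  Then:
(1) `spin u w = spin v w` for every tree vertex `w ≠ u, v` not lying on `P_{u,v}`;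
(2) `spin u w = −spin v w` for every tree vertex `w ≠ u, v` lying on `P_{u,v}`,
with the only exception that if `w ≠ r` and `P_{r,u} ∩ P_{r,v} = P_{r,w}` then
`spin u w = spin v w`.

The sign and spin functions are axiomatised by their defining properties, as in the
paper: `sign r` takes value `+1` on one component of `R − r` and `−1` on the other;
`spin v u = sign v u * (−1)^(cp + tv)` where `cp` is the number of consecutive pairs
on `P_{v,u}` and `tv` the number of tree vertices on `P_{v,u}`; and for a tree
vertex `v ≠ r`, `sign v u = spin r v` if `u` is on the same side of `v` as `r`,
and `sign v u = −spin r v` otherwise. -/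
theorem spin_compared_between_tree_vertices
    {V : Type} (R : SimpleGraph V) (lab : V → ℕ) (r : V)
    (htree : R.IsTree)
    (hr : lab r = 0)
    (h0 : ∀ v, lab v = 0 → ∃ a b, a ≠ b ∧ R.neighborSet v = {a, b} ∧
      lab a = 1 ∧ lab b = 1)
    (h1 : ∀ v n, lab v = n + 1 → ∃ a b c, a ≠ b ∧ a ≠ c ∧ b ≠ c ∧
      R.neighborSet v = {a, b, c} ∧ lab a = n ∧ lab b = n + 1 ∧ lab c = n + 2)
    (sign : V → V → ℤ) (spin : V → V → ℤ)
    (hsignr_val : ∀ u, u ≠ r → sign r u = 1 ∨ sign r u = -1)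
    (hsignr_comp : ∀ a b, a ≠ r → b ≠ r → (sign r a = sign r b ↔ SameSide R r a b))
    (hspin : ∀ v u, lab v = 0 → lab u = 0 → u ≠ v →
      ∀ p : R.Walk v u, p.IsPath →
        spin v u = sign v u * (-1) ^ (cpCount lab p.support + tvCount lab p.support))
    (hsignv : ∀ v, lab v = 0 → v ≠ r → ∀ u, u ≠ v →
      (SameSide R v u r → sign v u = spin r v) ∧
      (¬ SameSide R v u r → sign v u = - spin r v)) :
    ∀ u v, lab u = 0 → lab v = 0 →
      ∀ p : R.Walk u v, p.IsPath →
        ∀ w, lab w = 0 → w ≠ u → w ≠ v →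
          (w ∉ p.support → spin u w = spin v w) ∧
          (w ∈ p.support →
            ∀ (pu : R.Walk r u) (pv : R.Walk r v) (pw : R.Walk r w),
              pu.IsPath → pv.IsPath → pw.IsPath →
              ((w ≠ r ∧ {x | x ∈ pu.support} ∩ {x | x ∈ pv.support}
                  = {x | x ∈ pw.support}) →
                spin u w = spin v w) ∧
              (¬ (w ≠ r ∧ {x | x ∈ pu.support} ∩ {x | x ∈ pv.support}
                  = {x | x ∈ pw.support}) →
                spin u w = - spin v w)) := by
  intro u v hu hv p hp w hw hwu hwv
  have hpuv : p = Pa htree u v := Pa_unique htree p hp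
  -- spin to r helper
  have spin_to_r : ∀ x, lab x = 0 → x ≠ r → spin x r = sign r x := by
    intro x hx hxr
    have e1 : spin x r = sign x r * wtW lab (Pa htree x r) :=
      hspin x r hx hr (Ne.symm hxr) (Pa htree x r) (Pa_isPath htree x r)
    have e2 : sign x r = spin r x := by
      refine (hsignv x hx hxr r (Ne.symm hxr)).1 ?_
      exact ⟨SimpleGraph.Walk.nil, by simpa using hxr⟩
    have e3 : spin r x = sign r x * wtW lab (Pa htree r x) :=
      hspin r x hr hx hxr (Pa htree r x) (Pa_isPath htree r x)
    have e4 : wtW lab (Pa htree x r) = wtW lab (Pa htree r x) := by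
      rw [Pa_reverse htree r x, wt_reverse]
    have e5 := wt_sq lab (Pa htree r x)
    rw [e1, e2, e3, e4]
    linear_combination (sign r x) * e5
  obtain ⟨m, s, A, B, hm1, hm2, hm3, hm4⟩ := median_full htree r u v
  have hsA_path : (s.append A).IsPath := by rw [← hm1]; exact Pa_isPath htree r u
  have hsB_path : (s.append B).IsPath := by rw [← hm2]; exact Pa_isPath htree r v
  have hspath : s.IsPath := hsA_path.of_append_left
  have hsPa : s = Pa htree r m := Pa_unique htree s hspath
  constructor
  · -- part 1 : w not on the path
    intro hwp
    by_cases hwr : w = r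
    · subst hwr
      have e1 := spin_to_r u hu (Ne.symm hwu)
      have e2 := spin_to_r v hv (Ne.symm hwv)
      rw [e1, e2]
      refine sign_eq' htree sign w hsignr_comp (Ne.symm hwu) (Ne.symm hwv) ?_
      rw [← hpuv]; exact hwp
    · have e1 := master htree lab r hr h0 sign spin hsignr_val hsignr_comp hspin hsignv
        hu hw hwu hwr
      have e2 := master htree lab r hr h0 sign spin hsignr_val hsignr_comp hspin hsignv
        hv hw hwv hwr
      rw [hpuv, hm3, Walk.mem_support_append_iff] at hwp
      push_neg at hwp
      have wA : w ∉ A.support := by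
        intro h; exact hwp.1 (by rwa [SimpleGraph.Walk.support_reverse, List.mem_reverse])
      have wB : w ∉ B.support := hwp.2
      have hiff : (w ∈ (Pa htree r u).support) ↔ (w ∈ (Pa htree r v).support) := by
        rw [hm1, hm2, Walk.mem_support_append_iff, Walk.mem_support_append_iff]
        constructor
        · rintro (h | h)
          · exact Or.inl h
          · exact absurd h wA
        · rintro (h | h)
          · exact Or.inl h
          · exact absurd h wB
      rw [e1, e2]
      by_cases hcase : w ∈ (Pa htree r u).support
      · rw [if_pos hcase, if_pos (hiff.1 hcase)]
      · rw [if_neg hcase, if_neg (fun h => hcase (hiff.2 h))]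
  · -- part 2 : w on the path
    intro hwp pu pv pw hpu hpv hpw
    have hpu' : pu = Pa htree r u := Pa_unique htree pu hpu
    have hpv' : pv = Pa htree r v := Pa_unique htree pv hpv
    have hpw' : pw = Pa htree r w := Pa_unique htree pw hpw
    have hinter : ∀ t, (t ∈ pu.support ∧ t ∈ pv.support) ↔ t ∈ s.support := by
      intro t
      rw [hpu', hpv', hm1, hm2, Walk.mem_support_append_iff, Walk.mem_support_append_iff]
      constructor
      · rintro ⟨h1' | h1', h2' | h2'⟩
        · exact h1'
        · exact h1'
        · exact h2'
        · exact (hm4 t h1' h2') ▸ (Walk.end_mem_support s)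
      · intro h
        exact ⟨Or.inl h, Or.inl h⟩
    constructor
    · rintro ⟨hwr, hset⟩
      have hsets : ∀ t, t ∈ (Pa htree r m).support ↔ t ∈ (Pa htree r w).support := by
        intro t
        have h' := Set.ext_iff.1 hset t
        simp only [Set.mem_inter_iff, Set.mem_setOf_eq] at h'
        rw [← hsPa, ← hpw']
        exact (hinter t).symm.trans h'
      have hwm : m = w := supp_set_eq htree hsets
      have e1 := master htree lab r hr h0 sign spin hsignr_val hsignr_comp hspin hsignv
        hu hw hwu hwr
      have e2 := master htree lab r hr h0 sign spin hsignr_val hsignr_comp hspin hsignv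
        hv hw hwv hwr
      have hm_u : w ∈ (Pa htree r u).support := by
        rw [hm1, Walk.mem_support_append_iff]
        exact Or.inl (hwm ▸ Walk.end_mem_support s)
      have hm_v : w ∈ (Pa htree r v).support := by
        rw [hm2, Walk.mem_support_append_iff]
        exact Or.inl (hwm ▸ Walk.end_mem_support s)
      rw [e1, e2, if_pos hm_u, if_pos hm_v]
    · intro hnot
      by_cases hwr : w = r
      · subst hwr
        have e1 := spin_to_r u hu (Ne.symm hwu)
        have e2 := spin_to_r v hv (Ne.symm hwv)
        rw [e1, e2]
        refine sign_neg' htree sign w hsignr_val hsignr_comp (Ne.symm hwu) (Ne.symm hwv) ?_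
        rw [← hpuv]; exact hwp
      · have hwm : w ≠ m := by
          intro he
          apply hnot
          refine ⟨hwr, ?_⟩
          ext t
          simp only [Set.mem_inter_iff, Set.mem_setOf_eq]
          rw [hinter t, hsPa, hpw', ← he]
        have e1 := master htree lab r hr h0 sign spin hsignr_val hsignr_comp hspin hsignv
          hu hw hwu hwr
        have e2 := master htree lab r hr h0 sign spin hsignr_val hsignr_comp hspin hsignv
          hv hw hwv hwr
        have hwmem : w ∈ A.support ∨ w ∈ B.support := by
          rw [hpuv, hm3, Walk.mem_support_append_iff] at hwp
          rcases hwp with h | h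
          · exact Or.inl (by rwa [SimpleGraph.Walk.support_reverse, List.mem_reverse] at h)
          · exact Or.inr h
        rcases hwmem with hwA | hwB
        · have hm_u : w ∈ (Pa htree r u).support := by
            rw [hm1, Walk.mem_support_append_iff]; exact Or.inr hwA
          have hm_v : w ∉ (Pa htree r v).support := by
            rw [hm2, Walk.mem_support_append_iff]
            rintro (h' | h')
            · exact hwm (append_path_inter hsA_path h' hwA)
            · exact hwm (hm4 w hwA h')
          rw [e1, e2, if_pos hm_u, if_neg hm_v]
          ring
        · have hm_u : w ∉ (Pa htree r u).support := by
            rw [hm1, Walk.mem_support_append_iff]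
            rintro (h' | h')
            · exact hwm (append_path_inter hsB_path h' hwB)
            · exact hwm (hm4 w h' hwB)
          have hm_v : w ∈ (Pa htree r v).support := by
            rw [hm2, Walk.mem_support_append_iff]; exact Or.inr hwB
          rw [e1, e2, if_neg hm_u, if_pos hm_v]
          ring
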